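/- For every integer n ≥ 1, the integral over the open unit disk with respect to planar Lebesgue measure satisfies ∫_𝔻 ( (n+1)·y^n·log|1 − y| + (1/2)·(1 − y^{n+1})/(1 − y) ) dy = (π/2)·(1 − 1/n), where the left-hand side is an integral of a complex-valued function whose value is the real number (π/2)(1 − 1/n). -/

import Mathlib

open Metric MeasureTheory Set

lemma expInt (k : ℤ) : (∫ θ in Ioo (-Real.pi) Real.pi, Complex.exp (k * θ * Complex.I)) =
    if k = 0 then (2 * Real.pi : ℝ) else 0 := by
  have h1 : (∫ θ in Ioo (-Real.pi) Real.pi, Complex.exp (k * θ * Complex.I))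
      = ∫ θ in (-Real.pi)..Real.pi, Complex.exp (k * θ * Complex.I) := by
    rw [intervalIntegral.integral_of_le (neg_le_self Real.pi_nonneg),
      ← integral_Ioc_eq_integral_Ioo]
  rw [h1]
  rcases eq_or_ne k 0 with rfl | hk
  · simp only [Int.cast_zero, zero_mul, Complex.exp_zero, if_pos]
    rw [intervalIntegral.integral_const, Complex.real_smul]
    push_cast
    ring
  · rw [if_neg hk]
    have : ∀ θ : ℝ, (k : ℂ) * θ * Complex.I = (k * Complex.I) * θ := by intro θ; ring
    simp_rw [this]
    rw [integral_exp_mul_complex (by simp [Complex.I_ne_zero, hk])]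
    have e1 : Complex.exp ((k * Complex.I) * Real.pi) = (-1) ^ k := by
      rw [show ((k : ℂ) * Complex.I) * Real.pi = k * (Real.pi * Complex.I) by ring]
      rw [Complex.exp_int_mul, Complex.exp_pi_mul_I]
    have e2 : Complex.exp ((k * Complex.I) * (-Real.pi : ℝ)) = (-1) ^ k := by
      rw [show ((k : ℂ) * Complex.I) * ((-Real.pi : ℝ) : ℂ) = ((-k : ℤ) : ℂ) * (Real.pi * Complex.I) by push_cast; ring]
      rw [Complex.exp_int_mul, Complex.exp_pi_mul_I, zpow_neg, ← inv_zpow, inv_neg, inv_one]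
    rw [e1, e2, sub_self, zero_div]; norm_num

lemma expCont (k : ℤ) : Continuous (fun θ : ℝ => Complex.exp (k * θ * Complex.I)) := by
  fun_prop

lemma expIntOn (k : ℤ) : IntegrableOn (fun θ : ℝ => Complex.exp (k * θ * Complex.I))
    (Ioo (-Real.pi) Real.pi) := by
  exact ((expCont k).integrableOn_Icc (a := -Real.pi) (b := Real.pi)).mono_set
    Ioo_subset_Icc_self

lemma expNorm (k : ℤ) (θ : ℝ) : ‖Complex.exp ((k : ℂ) * θ * Complex.I)‖ = 1 := by
  rw [show ((k : ℂ) * θ * Complex.I) = (((k : ℝ) * θ : ℝ) : ℂ) * Complex.I by push_cast; ring,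
    Complex.norm_exp_ofReal_mul_I]

lemma logInt : IntegrableOn Real.log (Ioo (0:ℝ) 1) := by
  have h1 : IntegrableOn (fun x : ℝ => 2 * x ^ (-(1/2) : ℝ)) (Ioo 0 1) := by
    have := (intervalIntegral.intervalIntegrable_rpow' (a := 0) (b := 1)
      (r := (-(1/2) : ℝ)) (by norm_num)).1
    rw [integrableOn_Ioc_iff_integrableOn_Ioo] at this
    exact this.const_mul 2
  refine Integrable.mono' h1 (Real.measurable_log.aestronglyMeasurable.restrict) ?_
  filter_upwards [ae_restrict_mem measurableSet_Ioo] with x hx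
  have hx0 : 0 < x := hx.1
  have hx1 : x < 1 := hx.2
  have hlog : Real.log x ≤ 0 := Real.log_nonpos hx0.le hx1.le
  rw [Real.norm_eq_abs, abs_of_nonpos hlog]
  have h2 : Real.log (x ^ (-(1/2) : ℝ)) ≤ x ^ (-(1/2) : ℝ) - 1 :=
    Real.log_le_sub_one_of_pos (Real.rpow_pos_of_pos hx0 _)
  rw [Real.log_rpow hx0] at h2
  nlinarith [Real.rpow_pos_of_pos hx0 (-(1/2) : ℝ)]

lemma logInt2 : IntegrableOn (fun r : ℝ => Real.log (1 - r)) (Ioo (0:ℝ) 1) := by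
  have himg : (fun x : ℝ => 1 - x) '' Ioo 0 1 = Ioo 0 1 := by
    rw [Set.image_const_sub_Ioo]; norm_num
  have := integrableOn_image_iff_integrableOn_abs_deriv_smul (s := Ioo (0:ℝ) 1) (f := fun x : ℝ => 1 - x)
    (f' := fun _ => (-1 : ℝ)) measurableSet_Ioo
    (fun x _ => ((hasDerivAt_id x).const_sub 1).hasDerivWithinAt)
    (fun a _ b _ h => by dsimp at h; linarith) Real.log
  rw [himg] at this
  have h2 := this.1 logInt
  simpa using h2

lemma polarBall (f : ℂ → ℂ) :
    (∫ y in ball (0 : ℂ) 1, f y) =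
      ∫ p in Ioo (0:ℝ) 1 ×ˢ Ioo (-Real.pi) Real.pi,
        (p.1 : ℂ) * f ((p.1 : ℂ) * Complex.exp (p.2 * Complex.I)) := by
  have h0 := Complex.integral_comp_polarCoord_symm (Set.indicator (ball (0:ℂ) 1) f)
  rw [← integral_indicator measurableSet_ball, ← h0]
  have h1 : ∀ p ∈ polarCoord.target,
      p.1 • (Set.indicator (ball (0:ℂ) 1) f) (Complex.polarCoord.symm p)
      = Set.indicator (Iio (1:ℝ) ×ˢ (univ : Set ℝ))
          (fun p : ℝ × ℝ => (p.1 : ℂ) * f ((p.1 : ℂ) * Complex.exp (p.2 * Complex.I))) p := by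
    intro p hp
    rw [polarCoord_target] at hp
    have hp1 : 0 < p.1 := hp.1
    have habs : ‖Complex.polarCoord.symm p‖ = p.1 := by
      rw [Complex.norm_polarCoord_symm, abs_of_pos hp1]
    have hsymm : Complex.polarCoord.symm p = (p.1 : ℂ) * Complex.exp (p.2 * Complex.I) := by
      rw [Complex.polarCoord_symm_apply, Complex.exp_mul_I]
      push_cast
      ring
    by_cases hlt : p.1 < 1
    · rw [Set.indicator_of_mem, Set.indicator_of_mem, hsymm, Complex.real_smul]
      · exact ⟨hlt, trivial⟩
      · rw [mem_ball, dist_zero_right, habs]; exact hlt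
    · rw [Set.indicator_of_notMem, Set.indicator_of_notMem, smul_zero]
      · intro hmem; exact hlt hmem.1
      · rw [mem_ball, dist_zero_right, habs]; exact hlt
  rw [setIntegral_congr_fun (polarCoord.open_target.measurableSet) h1,
    setIntegral_indicator (measurableSet_Iio.prod MeasurableSet.univ)]
  congr 1
  rw [polarCoord_target, Set.prod_inter_prod, Set.inter_univ, Set.Ioi_inter_Iio]

lemma Jlem (n : ℕ) (hn : 1 ≤ n) {r : ℝ} (hr0 : 0 < r) (hr1 : r < 1) :
    (∫ θ in Ioo (-Real.pi) Real.pi, Complex.exp (n * θ * Complex.I) *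
      ((Real.log (‖1 - r * Complex.exp (θ * Complex.I)‖) : ℝ) : ℂ))
    = -(Real.pi * r ^ n / n : ℝ) := by
  set F : ℕ → ℝ → ℂ := fun m θ => (-(1/2) * ((r ^ m / m : ℝ) : ℂ)) *
    (Complex.exp ((((n : ℤ) + m : ℤ) : ℂ) * θ * Complex.I)
      + Complex.exp ((((n : ℤ) - m : ℤ) : ℂ) * θ * Complex.I)) with hF
  have hpt : ∀ θ : ℝ, HasSum (fun m => F m θ)
      (Complex.exp (n * θ * Complex.I) *
        ((Real.log (‖1 - r * Complex.exp (θ * Complex.I)‖) : ℝ) : ℂ)) := by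
    intro θ
    set z : ℂ := (r : ℂ) * Complex.exp (θ * Complex.I) with hz
    have hzn : ‖z‖ < 1 := by
      rw [hz]
      simp only [norm_mul, Complex.norm_real, Real.norm_eq_abs,
        Complex.norm_exp_ofReal_mul_I, mul_one, abs_of_pos hr0]
      exact hr1
    have h1 : HasSum (fun m : ℕ => z ^ m / m) (-Complex.log (1 - z)) :=
      Complex.hasSum_taylorSeries_neg_log hzn
    have h2 : HasSum (fun m : ℕ => (starRingEnd ℂ) (z ^ m / m))
        ((starRingEnd ℂ) (-Complex.log (1 - z))) :=
      h1.mapL Complex.conjCLE.toContinuousLinearMap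
    have h3 := ((h1.add h2).mul_left (-(1/2) * Complex.exp (n * θ * Complex.I)))
    have hfun : ∀ m : ℕ, (-(1/2) * Complex.exp ((n : ℂ) * θ * Complex.I)) *
        (z ^ m / m + (starRingEnd ℂ) (z ^ m / m)) = F m θ := by
      intro m
      have hzm : z ^ m = (r : ℂ) ^ m * Complex.exp ((m : ℂ) * θ * Complex.I) := by
        rw [hz, mul_pow, ← Complex.exp_nat_mul]
        ring_nf
      have hzmc : (starRingEnd ℂ) (z ^ m / m)
          = (r : ℂ) ^ m * Complex.exp (-((m : ℂ) * θ * Complex.I)) / m := by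
        rw [hzm, map_div₀, map_mul, map_pow, Complex.conj_ofReal, map_natCast,
          ← Complex.exp_conj]
        congr 2
        rw [map_mul, map_mul, Complex.conj_ofReal, Complex.conj_I, map_natCast]
        ring
      rw [hzmc, hzm, hF]
      simp only
      have e1 : Complex.exp ((((n : ℤ) + m : ℤ) : ℂ) * θ * Complex.I)
          = Complex.exp ((n : ℂ) * θ * Complex.I) * Complex.exp ((m : ℂ) * θ * Complex.I) := by
        rw [← Complex.exp_add]; congr 1; push_cast; ring
      have e2 : Complex.exp ((((n : ℤ) - m : ℤ) : ℂ) * θ * Complex.I)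
          = Complex.exp ((n : ℂ) * θ * Complex.I) * Complex.exp (-((m : ℂ) * θ * Complex.I)) := by
        rw [← Complex.exp_add]; congr 1; push_cast; ring
      rw [e1, e2]
      push_cast
      ring
    have hvalue : (-(1/2) * Complex.exp ((n : ℂ) * θ * Complex.I)) *
        (-Complex.log (1 - z) + (starRingEnd ℂ) (-Complex.log (1 - z)))
        = Complex.exp (n * θ * Complex.I) *
          ((Real.log (‖1 - z‖) : ℝ) : ℂ) := by
      have hre : ((Real.log (‖1 - z‖) : ℝ) : ℂ)
          = (Complex.log (1 - z) + (starRingEnd ℂ) (Complex.log (1 - z))) / 2 := by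
        rw [← Complex.log_re, Complex.add_conj]
        push_cast
        ring
      rw [hre, map_neg]
      ring
    have := (funext hfun : _ = fun m => F m θ) ▸ h3
    rw [hvalue] at this
    exact this
  have hFint : ∀ m : ℕ, IntegrableOn (F m) (Ioo (-Real.pi) Real.pi) := by
    intro m
    exact (((expIntOn ((n : ℤ) + m)).add (expIntOn ((n : ℤ) - m))).const_mul _)
  have hFsum : Summable (fun m : ℕ => ∫ θ in Ioo (-Real.pi) Real.pi, ‖F m θ‖) := by
    refine Summable.of_nonneg_of_le (fun m => integral_nonneg fun θ => norm_nonneg _)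
      (fun m => ?_) ((summable_geometric_of_lt_one hr0.le hr1).mul_left (2 * Real.pi))
    have hb : ∀ θ ∈ Ioo (-Real.pi) Real.pi, ‖F m θ‖ ≤ r ^ m := by
      intro θ _
      rw [hF]
      simp only
      rw [norm_mul (-(1/2) * ((r ^ m / m : ℝ) : ℂ))
        (Complex.exp ((((n : ℤ) + m : ℤ) : ℂ) * θ * Complex.I)
          + Complex.exp ((((n : ℤ) - m : ℤ) : ℂ) * θ * Complex.I))]
      have h1 : ‖(-(1/2) * ((r ^ m / m : ℝ) : ℂ) : ℂ)‖ = (1/2) * (r ^ m / m) := by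
        rw [norm_mul]
        simp only [norm_neg, Complex.norm_real, Real.norm_eq_abs]
        rw [abs_of_nonneg (by positivity)]
        norm_num
      have h2 : ‖Complex.exp ((((n : ℤ) + m : ℤ) : ℂ) * θ * Complex.I)
          + Complex.exp ((((n : ℤ) - m : ℤ) : ℂ) * θ * Complex.I)‖ ≤ 2 := by
        refine (norm_add_le _ _).trans ?_
        rw [expNorm, expNorm]
        norm_num
      rw [h1]
      have hnn : (0:ℝ) ≤ (1/2) * (r ^ m / m) := by positivity
      have h3 := mul_le_mul_of_nonneg_left h2 hnn
      refine h3.trans ?_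
      rcases Nat.eq_zero_or_pos m with rfl | hm
      · simp
      · have h4 : r ^ m / m ≤ r ^ m := div_le_self (by positivity) (by exact_mod_cast hm)
        linarith
    calc (∫ θ in Ioo (-Real.pi) Real.pi, ‖F m θ‖)
        ≤ ∫ θ in Ioo (-Real.pi) Real.pi, r ^ m := by
          refine setIntegral_mono_on (hFint m).norm (integrableOn_const ?_)
            measurableSet_Ioo hb
          exact measure_Ioo_lt_top.ne
      _ = 2 * Real.pi * r ^ m := by
          rw [setIntegral_const, Real.volume_real_Ioo_of_le (by linarith [Real.pi_pos]), smul_eq_mul]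
          ring_nf
  have hsum := hasSum_integral_of_summable_integral_norm hFint hFsum
  have hJ : (∫ θ in Ioo (-Real.pi) Real.pi, Complex.exp (n * θ * Complex.I) *
      ((Real.log (‖1 - r * Complex.exp (θ * Complex.I)‖) : ℝ) : ℂ))
      = ∫ θ in Ioo (-Real.pi) Real.pi, ∑' m, F m θ := by
    refine integral_congr_ae (Filter.Eventually.of_forall fun θ => ?_)
    exact ((hpt θ).tsum_eq).symm
  have hval : ∀ m : ℕ, (∫ θ in Ioo (-Real.pi) Real.pi, F m θ)
      = (-(1/2) * ((r ^ m / m : ℝ) : ℂ)) *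
        (((if ((n : ℤ) + m) = 0 then (2 * Real.pi : ℝ) else 0 : ℝ) : ℂ)
          + ((if ((n : ℤ) - m) = 0 then (2 * Real.pi : ℝ) else 0 : ℝ) : ℂ)) := by
    intro m
    rw [hF]
    simp only
    rw [integral_const_mul, integral_add (expIntOn _) (expIntOn _), expInt, expInt]
  have hzero : ∀ m : ℕ, m ≠ n → (∫ θ in Ioo (-Real.pi) Real.pi, F m θ) = 0 := by
    intro m hm
    rw [hval m, if_neg (by omega), if_neg (by omega)]
    simp
  have hone := (hasSum_single (f := fun m => ∫ θ in Ioo (-Real.pi) Real.pi, F m θ) n hzero)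
  have heq := hsum.unique hone
  rw [hJ]
  rw [show (∫ θ in Ioo (-Real.pi) Real.pi, ∑' m, F m θ)
    = ∫ a in Ioo (-Real.pi) Real.pi, ∑' m, F m a from rfl] at *
  rw [heq]
  show (∫ θ in Ioo (-Real.pi) Real.pi, F n θ) = _
  rw [hval n, if_neg (by omega), if_pos (by ring)]
  have hnne : (n : ℂ) ≠ 0 := Nat.cast_ne_zero.2 (by omega)
  push_cast
  field_simp
  ring

-- nat-cast versions
lemma expIntN (k : ℕ) : (∫ θ in Ioo (-Real.pi) Real.pi, Complex.exp (k * θ * Complex.I)) =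
    if k = 0 then (2 * Real.pi : ℝ) else 0 := by
  have h := expInt (k : ℤ)
  rw [show (((k : ℤ) : ℂ)) = (k : ℂ) by push_cast; rfl] at h
  rw [h]
  by_cases hk : k = 0
  · simp [hk]
  · rw [if_neg hk, if_neg (by exact_mod_cast hk)]
lemma expIntOnN (k : ℕ) : IntegrableOn (fun θ : ℝ => Complex.exp (k * θ * Complex.I))
    (Ioo (-Real.pi) Real.pi) := by
  have h := expIntOn (k : ℤ)
  rw [show (((k : ℤ) : ℂ)) = (k : ℂ) by push_cast; rfl] at h
  exact h
lemma expNormN (k : ℕ) (θ : ℝ) : ‖Complex.exp ((k : ℂ) * θ * Complex.I)‖ = 1 := by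
  have h := expNorm (k : ℤ) θ
  rwa [show (((k : ℤ) : ℂ)) = (k : ℂ) by push_cast; rfl] at h

lemma powInt (k : ℕ) : (∫ r in Ioo (0:ℝ) 1, ((r : ℝ) : ℂ) ^ k) = ((k : ℂ) + 1)⁻¹ := by
  rw [← integral_Ioc_eq_integral_Ioo, ← intervalIntegral.integral_of_le zero_le_one]
  simp_rw [← Complex.ofReal_pow]
  rw [intervalIntegral.integral_ofReal, integral_pow]
  push_cast
  norm_num

/-- For `n ≥ 1`,
`∫_𝔻 ((n+1) y^n log|1−y| + (1/2)(1−y^{n+1})/(1−y)) dy = (π/2)(1 − 1/n)`. -/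
theorem stmt15 (n : ℕ) (hn : 1 ≤ n) :
    ∫ y in ball (0 : ℂ) 1,
        (((n : ℂ) + 1) * y ^ n * ((Real.log (‖1 - y‖) : ℝ) : ℂ)
          + (1 / 2) * (1 - y ^ (n + 1)) / (1 - y)) =
      (((Real.pi / 2) * (1 - 1 / (n : ℝ)) : ℝ) : ℂ) := by
  have hnR : (0:ℝ) < n := by exact_mod_cast hn
  have hnC : (n : ℂ) ≠ 0 := Nat.cast_ne_zero.2 (by omega)
  set T : Set (ℝ × ℝ) := Ioo (0:ℝ) 1 ×ˢ Ioo (-Real.pi) Real.pi with hT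
  have hTm : MeasurableSet T := measurableSet_Ioo.prod measurableSet_Ioo
  set z : ℝ × ℝ → ℂ := fun p => (p.1 : ℂ) * Complex.exp (p.2 * Complex.I) with hzdef
  set G1 : ℝ × ℝ → ℂ := fun p => ((n : ℂ) + 1) * (p.1 : ℂ) ^ (n+1) *
      Complex.exp ((n : ℂ) * p.2 * Complex.I) *
      ((Real.log (‖1 - z p‖) : ℝ) : ℂ) with hG1def
  set G2 : ℝ × ℝ → ℂ := fun p => (1/2 : ℂ) * ∑ k ∈ Finset.range (n+1),
      (p.1 : ℂ) ^ (k+1) * Complex.exp ((k : ℂ) * p.2 * Complex.I) with hG2def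
  -- basic facts on T
  have hz_abs : ∀ p ∈ T, ‖z p‖ = p.1 := by
    intro p hp
    rw [hzdef]
    simp only [norm_mul, Complex.norm_real, Real.norm_eq_abs, Complex.norm_exp_ofReal_mul_I, mul_one]
    exact abs_of_pos hp.1.1
  have hz_ne_one : ∀ p ∈ T, z p ≠ 1 := by
    intro p hp h
    have := hz_abs p hp
    rw [h] at this
    simp at this
    exact absurd this.symm (ne_of_lt hp.1.2)
  have hzpow : ∀ (p : ℝ × ℝ) (k : ℕ), z p ^ k = (p.1:ℂ)^k * Complex.exp ((k:ℂ) * p.2 * Complex.I) := by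
    intro p k
    rw [hzdef]
    simp only
    rw [mul_pow, ← Complex.exp_nat_mul]
    ring_nf
  -- step 1 : polar coordinates
  rw [polarBall]
  -- step 2 : rewrite the integrand on T
  rw [setIntegral_congr_fun hTm (g := fun p => G1 p + G2 p) ?_]
  swap
  · intro p hp
    have h1 : (1 - z p ^ (n+1)) / (1 - z p) = ∑ k ∈ Finset.range (n+1), z p ^ k := by
      rw [geom_sum_eq (hz_ne_one p hp)]
      have hne : z p - 1 ≠ 0 := sub_ne_zero.2 (hz_ne_one p hp)
      have hne' : (1 : ℂ) - z p ≠ 0 := fun h => hne (by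
        have : z p = 1 := by linear_combination -h
        rw [this]; ring)
      field_simp
      ring
    simp only
    rw [mul_div_assoc, h1, hG1def, hG2def]
    simp only
    rw [hzpow p n]
    have h2 : ∑ k ∈ Finset.range (n+1), z p ^ k
        = ∑ k ∈ Finset.range (n+1), (p.1:ℂ)^k * Complex.exp ((k:ℂ) * p.2 * Complex.I) :=
      Finset.sum_congr rfl fun k _ => hzpow p k
    rw [h2]
    have h3 : ∑ k ∈ Finset.range (n+1), (p.1:ℂ)^(k+1) * Complex.exp ((k:ℂ) * p.2 * Complex.I)
        = (p.1:ℂ) * ∑ k ∈ Finset.range (n+1), (p.1:ℂ)^k * Complex.exp ((k:ℂ) * p.2 * Complex.I) := by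
      rw [Finset.mul_sum]
      refine Finset.sum_congr rfl fun k _ => ?_
      rw [pow_succ]
      ring
    rw [h3]
    ring
  -- integrability of G1
  have hG1cont : ContinuousOn G1 T := by
    have hzc : Continuous z := by
      rw [hzdef]; fun_prop
    have habsne : ∀ p ∈ T, ‖1 - z p‖ ≠ 0 := by
      intro p hp
      rw [ne_eq, norm_eq_zero, sub_eq_zero]
      exact fun h => (hz_ne_one p hp) h.symm
    have hlogc : ContinuousOn (fun p : ℝ × ℝ => Real.log (‖1 - z p‖)) T := by
      apply ContinuousOn.log
      · exact (continuous_norm.comp (continuous_const.sub hzc)).continuousOn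
      · exact habsne
    rw [hG1def]
    apply ContinuousOn.mul
    · apply Continuous.continuousOn
      fun_prop
    · exact Complex.continuous_ofReal.comp_continuousOn hlogc
  have hG1int : IntegrableOn G1 T := by
    have hbint : IntegrableOn (fun p : ℝ × ℝ =>
        ((n:ℝ)+1) * (Real.log 2 - Real.log (1 - p.1))) T := by
      rw [hT, IntegrableOn, Measure.volume_eq_prod, ← Measure.prod_restrict]
      have hf : Integrable (fun r : ℝ => ((n:ℝ)+1) * (Real.log 2 - Real.log (1 - r)))
          (volume.restrict (Ioo (0:ℝ) 1)) := by
        exact (((integrableOn_const measure_Ioo_lt_top.ne).sub logInt2).const_mul _)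
      have hg : Integrable (fun _ : ℝ => (1:ℝ)) (volume.restrict (Ioo (-Real.pi) Real.pi)) :=
        integrableOn_const measure_Ioo_lt_top.ne
      have := hf.mul_prod hg
      simpa using this
    refine Integrable.mono' hbint (hG1cont.aestronglyMeasurable hTm) ?_
    filter_upwards [ae_restrict_mem hTm] with p hp
    have hr0 : 0 < p.1 := hp.1.1
    have hr1 : p.1 < 1 := hp.1.2
    have hub : ‖1 - z p‖ ≤ 2 := by
      have h := norm_sub_le (1 : ℂ) (z p)
      rw [norm_one, hz_abs p hp] at h
      linarith
    have hlb : 1 - p.1 ≤ ‖1 - z p‖ := by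
      have h := norm_sub_norm_le (1 : ℂ) (z p)
      rw [norm_one, hz_abs p hp] at h
      linarith
    have h10 : (0:ℝ) < 1 - p.1 := by linarith
    have hlog : |Real.log (‖1 - z p‖)| ≤ Real.log 2 - Real.log (1 - p.1) := by
      have h1 : Real.log (1 - p.1) ≤ Real.log (‖1 - z p‖) :=
        Real.log_le_log h10 hlb
      have h2 : Real.log (‖1 - z p‖) ≤ Real.log 2 :=
        Real.log_le_log (lt_of_lt_of_le h10 hlb) hub
      have h3 : Real.log (1 - p.1) ≤ 0 := Real.log_nonpos h10.le (by linarith)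
      have h4 : (0:ℝ) ≤ Real.log 2 := Real.log_nonneg one_le_two
      rw [abs_le]
      constructor <;> linarith
    rw [hG1def]
    simp only
    rw [norm_mul, norm_mul, norm_mul]
    have e1 : ‖((n:ℂ)+1)‖ = (n:ℝ)+1 := by
      rw [show ((n:ℂ)+1) = (((n+1:ℕ)):ℂ) by push_cast; ring, Complex.norm_natCast]
      push_cast; ring
    have e2 : ‖((p.1:ℝ):ℂ)^(n+1)‖ = p.1^(n+1) := by
      rw [norm_pow, Complex.norm_real, Real.norm_eq_abs, abs_of_pos hr0]
    have e3 := expNormN n p.2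
    have e4 : ‖(((Real.log (‖1 - z p‖)):ℝ):ℂ)‖
        = |Real.log (‖1 - z p‖)| := by
      rw [Complex.norm_real, Real.norm_eq_abs]
    rw [e1, e2, e3, e4]
    have hp1 : p.1^(n+1) ≤ 1 := pow_le_one₀ hr0.le hr1.le
    have hLnn : (0:ℝ) ≤ Real.log 2 - Real.log (1 - p.1) := by
      have h3 : Real.log (1 - p.1) ≤ 0 := Real.log_nonpos h10.le (by linarith)
      have h4 : (0:ℝ) ≤ Real.log 2 := Real.log_nonneg one_le_two
      linarith
    have hnn : (0:ℝ) ≤ (n:ℝ)+1 := by positivity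
    have hpnn : (0:ℝ) ≤ p.1^(n+1) := by positivity
    calc ((n:ℝ)+1) * p.1^(n+1) * 1 * |Real.log (‖1 - z p‖)|
        ≤ ((n:ℝ)+1) * 1 * 1 * (Real.log 2 - Real.log (1 - p.1)) := by
          gcongr <;> first | exact hp1 | exact hlog
      _ = ((n:ℝ)+1) * (Real.log 2 - Real.log (1 - p.1)) := by ring
  -- integrability of G2
  have hG2int : IntegrableOn G2 T := by
    rw [hG2def]
    apply Integrable.const_mul
    apply integrable_finset_sum
    intro k _
    rw [hT, Measure.volume_eq_prod, ← Measure.prod_restrict]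
    have hf : Integrable (fun r : ℝ => (r:ℂ)^(k+1)) (volume.restrict (Ioo (0:ℝ) 1)) := by
      have hc : Continuous (fun r : ℝ => ((r:ℝ):ℂ)^(k+1)) := by fun_prop
      exact (hc.integrableOn_Icc (a := (0:ℝ)) (b := (1:ℝ))).mono_set Ioo_subset_Icc_self
    exact hf.mul_prod (expIntOnN k)
  rw [integral_add hG1int hG2int]
  -- Fubini for G1
  have hI1 : (∫ p in T, G1 p) = -(((n:ℂ)+1) * (Real.pi : ℂ) / n) * (((2*n+1 : ℕ) : ℂ) + 1)⁻¹ := by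
    rw [hT, Measure.volume_eq_prod] at hG1int ⊢
    rw [setIntegral_prod _ hG1int]
    have hinner : ∀ r ∈ Ioo (0:ℝ) 1,
        (∫ θ in Ioo (-Real.pi) Real.pi, G1 (r, θ))
        = (-(((n:ℂ)+1) * (Real.pi : ℂ) / n)) * ((r:ℝ):ℂ) ^ (2*n+1) := by
      intro r hr
      rw [hG1def]
      simp only
      have : ∀ θ : ℝ, ((n : ℂ) + 1) * (r : ℂ) ^ (n+1) *
          Complex.exp ((n : ℂ) * θ * Complex.I) *
          ((Real.log (‖1 - z (r, θ)‖) : ℝ) : ℂ)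
          = (((n : ℂ) + 1) * (r : ℂ) ^ (n+1)) *
            (Complex.exp ((n : ℂ) * θ * Complex.I) *
              ((Real.log (‖1 - (r:ℂ) * Complex.exp ((θ:ℂ) * Complex.I)‖) : ℝ) : ℂ)) := by
        intro θ; rw [hzdef]; ring
      simp_rw [this]
      rw [integral_const_mul, Jlem n hn hr.1 hr.2]
      push_cast
      ring
    rw [setIntegral_congr_fun measurableSet_Ioo hinner]
    rw [integral_const_mul, powInt]
  -- Fubini for G2
  have hI2 : (∫ p in T, G2 p) = (Real.pi : ℂ) / 2 := by
    rw [hT, Measure.volume_eq_prod] at hG2int ⊢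
    rw [setIntegral_prod _ hG2int]
    have hinner : ∀ r ∈ Ioo (0:ℝ) 1,
        (∫ θ in Ioo (-Real.pi) Real.pi, G2 (r, θ))
        = (Real.pi : ℂ) * ((r:ℝ):ℂ) ^ 1 := by
      intro r hr
      rw [hG2def]
      simp only
      rw [integral_const_mul, integral_finset_sum _
        (fun k _ => (expIntOnN k).const_mul ((r:ℂ)^(k+1)))]
      have : ∀ k ∈ Finset.range (n+1),
          (∫ θ in Ioo (-Real.pi) Real.pi, (r:ℂ)^(k+1) * Complex.exp ((k:ℂ) * θ * Complex.I))
          = if k = 0 then (r:ℂ) * ((2 * Real.pi : ℝ) : ℂ) else 0 := by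
        intro k _
        rw [integral_const_mul, expIntN]
        split_ifs with h
        · subst h; rw [pow_one]
        · simp
      rw [Finset.sum_congr rfl this, Finset.sum_ite_eq' (Finset.range (n+1)) 0]
      rw [if_pos (Finset.mem_range.2 (by omega))]
      push_cast
      ring
    rw [setIntegral_congr_fun measurableSet_Ioo hinner]
    rw [integral_const_mul, powInt]
    push_cast
    ring
  rw [hI1, hI2]
  rw [show (((2*n+1 : ℕ) : ℂ) + 1) = 2*((n:ℂ)+1) by push_cast; ring]
  have hn1 : ((n:ℂ)+1) ≠ 0 := Nat.cast_add_one_ne_zero n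
  push_cast
  field_simp
  ring
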